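/- arXiv:1904.11072 — 2 statements merged into one kernel-verified Lean document; each statement's English description precedes it below -/
import Mathlib

section
/- Let (X,G,Φ) be a Cantor action with a fixed compatible metric d, and let {U_ℓ} be an adapted neighborhood basis at x ∈ X with stabilizer chain K_ℓ := {f ∈ G(Φ) : f(z) = z for all z ∈ U_ℓ}. Then the following are equivalent: (i) the chain {K_ℓ} is eventually constant (there is ℓ₀ with K_ℓ = K_{ℓ₀} for all ℓ ≥ ℓ₀); (ii) the action of G(Φ) on X is locally completely quasi-analytic, i.e., there exists ε > 0 such that for every adapted clopen set U with diam(U) < ε, every adapted clopen set V ⊆ U, and all f₁, f₂ ∈ G(Φ): if f₁(z) = f₂(z) for all z ∈ V, then f₁(z) = f₂(z) for all z ∈ U. -/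
open Set Topology Filter

section CantorActionDefs

variable {X : Type*} [MetricSpace X] {G : Type*} [Group G]

/-- `Φ : G → Homeo(X)` is a group homomorphism, i.e. an action of `G` on `X` by
homeomorphisms. -/
def IsActionHom (Φ : G → X ≃ₜ X) : Prop :=
  (∀ x : X, Φ 1 x = x) ∧ ∀ g h : G, ∀ x : X, Φ (g * h) x = Φ g (Φ h x)

/-- The action is minimal: every orbit is dense. -/
def IsMinimalAction (Φ : G → X ≃ₜ X) : Prop :=
  ∀ x : X, Dense (Set.range fun g : G => Φ g x)

/-- The family `{Φ g : g ∈ G}` is equicontinuous with respect to the metric on `X`. -/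
def IsEquicontinuousAction (Φ : G → X ≃ₜ X) : Prop :=
  ∀ ε : ℝ, 0 < ε → ∃ δ : ℝ, 0 < δ ∧
    ∀ g : G, ∀ x y : X, dist x y < δ → dist (Φ g x) (Φ g y) < ε

/-- A Cantor action: a minimal equicontinuous action by homeomorphisms. -/
def IsCantorAction (Φ : G → X ≃ₜ X) : Prop :=
  IsActionHom Φ ∧ IsMinimalAction Φ ∧ IsEquicontinuousAction Φ

/-- A clopen subset adapted to the action: nonempty, clopen, and any translate meeting it
equals it. -/
def IsAdapted (Φ : G → X ≃ₜ X) (U : Set X) : Prop :=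
  U.Nonempty ∧ IsClopen U ∧ ∀ g : G, (Φ g '' U ∩ U).Nonempty → Φ g '' U = U

/-- The Ellis (closure) group `G(Φ)`: the closure of `{Φ g : g ∈ G}` in `C(X,X)` with the
compact-open topology. -/
def actionClosure (Φ : G → X ≃ₜ X) : Set C(X, X) :=
  closure (Set.range fun g : G => (Φ g : C(X, X)))

/-- An adapted neighborhood basis at `x`: a properly descending chain of adapted clopen
sets starting at `X`, containing `x`, with intersection `{x}`. -/
def IsAdaptedBasis (Φ : G → X ≃ₜ X) (x : X) (U : ℕ → Set X) : Prop :=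
  U 0 = Set.univ ∧ (∀ ℓ : ℕ, IsAdapted Φ (U ℓ)) ∧ (∀ ℓ : ℕ, x ∈ U ℓ) ∧
    (∀ ℓ : ℕ, U (ℓ + 1) ⊂ U ℓ) ∧ (⋂ ℓ : ℕ, U ℓ) = ({x} : Set X)

/-- The stabilizer chain `K_ℓ`: elements of the Ellis group fixing `U ℓ` pointwise. -/
def stabChain (Φ : G → X ≃ₜ X) (U : ℕ → Set X) (ℓ : ℕ) : Set C(X, X) :=
  {f ∈ actionClosure Φ | ∀ z ∈ U ℓ, f z = z}

/-- The stabilizer chain is eventually constant (the action is stable along `U`). -/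
def IsStableChain (Φ : G → X ≃ₜ X) (U : ℕ → Set X) : Prop :=
  ∃ ℓ₀ : ℕ, ∀ ℓ : ℕ, ℓ₀ ≤ ℓ → stabChain Φ U ℓ = stabChain Φ U ℓ₀

/-- The action of the Ellis group is locally completely quasi-analytic. -/
def IsLCQA (Φ : G → X ≃ₜ X) : Prop :=
  ∃ ε : ℝ, 0 < ε ∧ ∀ U : Set X, IsAdapted Φ U → Metric.diam U < ε →
    ∀ V : Set X, IsAdapted Φ V → V ⊆ U →
      ∀ f₁ ∈ actionClosure Φ, ∀ f₂ ∈ actionClosure Φ,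
        (∀ z ∈ V, f₁ z = f₂ z) → ∀ z ∈ U, f₁ z = f₂ z

/-- `f` is a non-Hausdorff element of the Ellis group at `x`. -/
def IsNonHausdorffElem (Φ : G → X ≃ₜ X) (f : C(X, X)) (x : X) : Prop :=
  f ∈ actionClosure Φ ∧ f x = x ∧
    (∀ W : Set X, IsClopen W → x ∈ W → ¬ ∀ z ∈ W, f z = z) ∧
    ∃ (xs : ℕ → X) (W : ℕ → Set X), Filter.Tendsto xs Filter.atTop (nhds x) ∧
      ∀ i : ℕ, xs i ∈ W i ∧ IsClopen (W i) ∧ ⇑f '' W i = W i ∧ ∀ z ∈ W i, f z = z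

/-- The restrictions to an invariant set `U` of the maps `Φ g` with `Φ g (U) = U`,
as elements of `C(U,U)`. -/
def restrictedMaps (Φ : G → X ≃ₜ X) (U : Set X) : Set C(U, U) :=
  {u : C(U, U) | ∃ g : G, Φ g '' U = U ∧ ∀ z : U, (u z : X) = Φ g (z : X)}

/-- The stabilizer subgroup `G_U = {g : G | Φ g (U) = U}` of a set `U`. -/
def setStabilizer (Φ : G → X ≃ₜ X) (hΦ : IsActionHom Φ) (U : Set X) : Subgroup G where
  carrier := {g : G | Φ g '' U = U}
  one_mem' := by
    show ⇑(Φ 1) '' U = U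
    have h : ⇑(Φ 1) = id := funext hΦ.1
    rw [h, Set.image_id]
  mul_mem' := by
    intro a b ha hb
    show ⇑(Φ (a * b)) '' U = U
    have h : ⇑(Φ (a * b)) = ⇑(Φ a) ∘ ⇑(Φ b) := funext fun z => hΦ.2 a b z
    rw [h, Set.image_comp]
    rw [show ⇑(Φ b) '' U = U from hb, show ⇑(Φ a) '' U = U from ha]
  inv_mem' := by
    intro a ha
    show ⇑(Φ a⁻¹) '' U = U
    have hcomp : ⇑(Φ a⁻¹) ∘ ⇑(Φ a) = id := funext fun z => by
      show Φ a⁻¹ (Φ a z) = z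
      have h2 := hΦ.2 a⁻¹ a z
      rw [inv_mul_cancel] at h2
      rw [← h2]
      exact hΦ.1 z
    calc ⇑(Φ a⁻¹) '' U = ⇑(Φ a⁻¹) '' (⇑(Φ a) '' U) := by
            rw [show ⇑(Φ a) '' U = U from ha]
      _ = (⇑(Φ a⁻¹) ∘ ⇑(Φ a)) '' U := (Set.image_comp _ _ _).symm
      _ = U := by rw [hcomp, Set.image_id]

end CantorActionDefs

section ChainDefs

variable {G : Type*} [Group G]

/-- A group chain in `G`: descending subgroups starting at `G`, each of finite index in
the previous one. -/
def IsGroupChain (K : ℕ → Subgroup G) : Prop :=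
  K 0 = ⊤ ∧ ∀ ℓ : ℕ, K (ℓ + 1) ≤ K ℓ ∧ (K (ℓ + 1)).relIndex (K ℓ) ≠ 0

/-- The inverse limit `lim← G ⧸ C ℓ` of the coset spaces along a chain, as a subset of
the product. -/
def chainLimitSet (C : ℕ → Subgroup G) : Set (∀ ℓ : ℕ, G ⧸ C ℓ) :=
  {σ | ∀ ℓ : ℕ, ∃ g : G, σ ℓ = (g : G ⧸ C ℓ) ∧ σ (ℓ + 1) = (g : G ⧸ C (ℓ + 1))}

/-- The inverse limit topology on `lim← G ⧸ C ℓ`: the subspace topology from the product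
of the discrete coset spaces. -/
def chainLimitTop (C : ℕ → Subgroup G) : TopologicalSpace (chainLimitSet C) :=
  TopologicalSpace.induced Subtype.val
    (@Pi.topologicalSpace ℕ (fun ℓ => G ⧸ C ℓ) fun _ => ⊥)

/-- The basepoint `(e C_ℓ)_ℓ` of the inverse limit. -/
def chainBasepoint (C : ℕ → Subgroup G) : chainLimitSet C :=
  ⟨fun ℓ => ((1 : G) : G ⧸ C ℓ), fun _ => ⟨1, rfl, rfl⟩⟩

theorem smul_mem_chainLimitSet {C : ℕ → Subgroup G} (g : G) {σ : ∀ ℓ : ℕ, G ⧸ C ℓ}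
    (hσ : σ ∈ chainLimitSet C) : (fun ℓ => g • σ ℓ) ∈ chainLimitSet C := by
  intro ℓ
  obtain ⟨k, h1, h2⟩ := hσ ℓ
  refine ⟨g * k, ?_, ?_⟩
  · show g • σ ℓ = _
    rw [h1]; rfl
  · show g • σ (ℓ + 1) = _
    rw [h2]; rfl

/-- The conjugate subgroup `g H g⁻¹`. -/
def conjSubgroup (g : G) (H : Subgroup G) : Subgroup G :=
  H.map (MulAut.conj g).toMonoidHom

/-- Equivalence of group chains (interlacing). -/
def ChainsEquivalent (Gc Hc : ℕ → Subgroup G) : Prop :=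
  ∃ K : ℕ → Subgroup G, IsGroupChain K ∧
    ∃ ls js : ℕ → ℕ, StrictMono ls ∧ StrictMono js ∧
      ∀ k : ℕ, K (2 * k) = Gc (ls k) ∧ K (2 * k + 1) = Hc (js k)

/-- Conjugate equivalence of group chains. -/
def ChainsConjugateEquivalent (Gc Hc : ℕ → Subgroup G) : Prop :=
  ∃ gs : ℕ → G, (∀ ℓ : ℕ, (gs ℓ)⁻¹ * gs (ℓ + 1) ∈ Gc ℓ) ∧
    ChainsEquivalent (fun ℓ => conjSubgroup (gs ℓ) (Gc ℓ)) Hc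

end ChainDefs

section TwoSpaces

variable {X : Type*} [MetricSpace X] {X' : Type*} [MetricSpace X']
variable {G : Type*} [Group G] {G' : Type*} [Group G']

/-- A continuous orbit equivalence between two actions, implemented by a homeomorphism
`h : X → X'` with locally constant orbit transfer functions. -/
def IsContinuousOrbitEquivalence (Φ : G → X ≃ₜ X) (Ψ : G' → X' ≃ₜ X') (h : X ≃ₜ X') :
    Prop :=
  (∀ (x : X) (g : G), ∃ (k : G') (O : Set X), IsOpen O ∧ x ∈ O ∧
      ∀ z ∈ O, Ψ k (h z) = h (Φ g z)) ∧
    ∀ (y : X') (k : G'), ∃ (g : G) (O : Set X'), IsOpen O ∧ y ∈ O ∧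
      ∀ w ∈ O, Φ g (h.symm w) = h.symm (Ψ k w)

end TwoSpaces

/-! The closure `G(Φ)` of an equicontinuous action consists of homeomorphisms and is closed
under composition and inversion: a uniform limit of maps `Φ gₙ` is inverted by the uniform limit
of the `Φ gₙ⁻¹`. If the stabilizer chain is constant from `ℓ₀` on, an element of `G(Φ)` fixing a
nonempty open set `V` is conjugated by some `Φ k` with `Φ k x ∈ V` into an element fixing a
neighbourhood of `x`, hence all of `U ℓ₀`; so it fixes `Φ k '' U ℓ₀`, which by equicontinuity
contains a ball about `Φ k x` of a radius `δ` independent of `k`. Applied to `f₂⁻¹ ∘ f₁` this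
gives quasi-analyticity at scale `δ`. Conversely, quasi-analyticity applied to `f` and the
identity gives `stabChain Φ U ℓ = stabChain Φ U ℓ₀` once `U ℓ₀` has diameter less than `ε`. -/

section CantorAction

variable {X : Type*} [MetricSpace X] {G : Type*} {Φ : G → X ≃ₜ X}

theorem coe_mem_actionClosure (g : G) : (Φ g : C(X, X)) ∈ actionClosure Φ :=
  subset_closure ⟨g, rfl⟩

theorem denseRange_of_mem_actionClosure [CompactSpace X] {f : C(X, X)}
    (hf : f ∈ actionClosure Φ) : DenseRange f := by
  refine Metric.denseRange_iff.2 fun y r hr => ?_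
  obtain ⟨_, ⟨g, rfl⟩, hg⟩ := Metric.mem_closure_iff.1 hf r hr
  refine ⟨(Φ g).symm y, ?_⟩
  calc dist y (f ((Φ g).symm y)) = dist (f ((Φ g).symm y)) (Φ g ((Φ g).symm y)) := by
        rw [dist_comm, Homeomorph.apply_symm_apply]
    _ ≤ dist f (Φ g : C(X, X)) := ContinuousMap.dist_apply_le_dist (f := f) (g := Φ g) _
    _ < r := hg

variable [Group G]

theorem IsActionHom.map_inv (hΦ : IsActionHom Φ) (g : G) : Φ g⁻¹ = (Φ g).symm := by
  ext z
  apply (Φ g).injective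
  rw [(Φ g).apply_symm_apply, ← hΦ.2, mul_inv_cancel, hΦ.1]

theorem IsActionHom.id_mem_actionClosure (hΦ : IsActionHom Φ) :
    ContinuousMap.id X ∈ actionClosure Φ := by
  convert coe_mem_actionClosure (Φ := Φ) 1
  ext z
  exact (hΦ.1 z).symm

theorem IsActionHom.comp_mem_actionClosure [LocallyCompactSpace X] (hΦ : IsActionHom Φ)
    {f₁ f₂ : C(X, X)} (h₁ : f₁ ∈ actionClosure Φ) (h₂ : f₂ ∈ actionClosure Φ) :
    f₁.comp f₂ ∈ actionClosure Φ :=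
  map_mem_closure₂ (ContinuousMap.continuous_comp'.comp continuous_swap) h₁ h₂ <| by
    rintro _ ⟨g, rfl⟩ _ ⟨h, rfl⟩
    exact ⟨g * h, ContinuousMap.ext fun z => hΦ.2 g h z⟩

theorem IsEquicontinuousAction.exists_ball_subset_image (hΦ : IsActionHom Φ)
    (hE : IsEquicontinuousAction Φ) {x : X} {O : Set X} (hO : O ∈ 𝓝 x) :
    ∃ δ > 0, ∀ g : G, Metric.ball (Φ g x) δ ⊆ Φ g '' O := by
  obtain ⟨ε, hε, hεO⟩ := Metric.mem_nhds_iff.1 hO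
  obtain ⟨δ, hδ, hδε⟩ := hE ε hε
  refine ⟨δ, hδ, fun g z hz => ⟨Φ g⁻¹ z, hεO ?_, ?_⟩⟩
  · simpa [hΦ.map_inv] using hδε g⁻¹ z (Φ g x) hz
  · rw [hΦ.map_inv, Homeomorph.apply_symm_apply]

section Compact

variable [CompactSpace X]

theorem IsEquicontinuousAction.exists_dist_lt_of_mem_actionClosure (hΦ : IsActionHom Φ)
    (hE : IsEquicontinuousAction Φ) {ε : ℝ} (hε : 0 < ε) :
    ∃ δ > 0, ∀ f ∈ actionClosure Φ, ∀ a b : X, dist (f a) (f b) < δ → dist a b < ε := by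
  obtain ⟨δ, hδ, hδε⟩ := hE ε hε
  refine ⟨δ, hδ, fun f hf a b hab => ?_⟩
  obtain ⟨_, ⟨g, rfl⟩, hg⟩ :=
    Metric.mem_closure_iff.1 hf ((δ - dist (f a) (f b)) / 2) (by linarith)
  have ha := ContinuousMap.dist_apply_le_dist (f := f) (g := Φ g) a
  have hb := ContinuousMap.dist_apply_le_dist (f := f) (g := Φ g) b
  have hgab : dist (Φ g a) (Φ g b) < δ := calc
    dist (Φ g a) (Φ g b) ≤ dist (Φ g a) (f a) + dist (f a) (f b) + dist (f b) (Φ g b) :=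
      dist_triangle4 _ _ _ _
    _ < δ := by rw [dist_comm] at ha; simp only [ContinuousMap.coe_coe] at ha hb; linarith
  simpa [hΦ.map_inv] using hδε g⁻¹ _ _ hgab

theorem IsEquicontinuousAction.injective_of_mem_actionClosure (hΦ : IsActionHom Φ)
    (hE : IsEquicontinuousAction Φ) {f : C(X, X)} (hf : f ∈ actionClosure Φ) :
    Function.Injective f := by
  intro a b hab
  by_contra hne
  obtain ⟨δ, hδ, hδε⟩ := hE.exists_dist_lt_of_mem_actionClosure hΦ (dist_pos.2 hne)
  exact lt_irrefl _ (hδε f hf a b (by rwa [hab, dist_self]))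

theorem IsEquicontinuousAction.exists_homeomorph_of_mem_actionClosure (hΦ : IsActionHom Φ)
    (hE : IsEquicontinuousAction Φ) {f : C(X, X)} (hf : f ∈ actionClosure Φ) :
    ∃ h : X ≃ₜ X, (h : C(X, X)) = f ∧ (h.symm : C(X, X)) ∈ actionClosure Φ := by
  have hsurj : Function.Surjective f := by
    rw [← Set.range_eq_univ, ← (isCompact_range f.continuous).isClosed.closure_eq]
    exact (denseRange_of_mem_actionClosure hf).closure_range
  let h : X ≃ₜ X := Continuous.homeoOfEquivCompactToT2
    (f := Equiv.ofBijective f ⟨hE.injective_of_mem_actionClosure hΦ hf, hsurj⟩) f.continuous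
  refine ⟨h, rfl, Metric.mem_closure_iff.2 fun ε hε => ?_⟩
  obtain ⟨δ, hδ, hδε⟩ := hE (ε / 2) (by positivity)
  obtain ⟨_, ⟨g, rfl⟩, hg⟩ := Metric.mem_closure_iff.1 hf δ hδ
  refine ⟨Φ g⁻¹, ⟨g⁻¹, rfl⟩, lt_of_le_of_lt ?_ (half_lt_self hε)⟩
  refine (ContinuousMap.dist_le (by positivity)).2 fun y => ?_
  obtain ⟨w, rfl⟩ := h.surjective y
  have hw := hδε g⁻¹ (f w) (Φ g w) ((ContinuousMap.dist_apply_le_dist w).trans_lt hg)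
  rw [hΦ.map_inv, Homeomorph.symm_apply_apply] at hw
  change dist (h.symm (h w)) (Φ g⁻¹ (f w)) ≤ ε / 2
  rw [h.symm_apply_apply, hΦ.map_inv, dist_comm]
  exact hw.le

end Compact

end CantorAction

section AdaptedBasis

variable {X : Type*} [MetricSpace X] {G : Type*} {Φ : G → X ≃ₜ X} {x : X} {U : ℕ → Set X}

theorem IsAdaptedBasis.antitone (hU : IsAdaptedBasis Φ x U) : Antitone U :=
  antitone_nat_of_succ_le fun ℓ => (hU.2.2.2.1 ℓ).subset

theorem IsAdaptedBasis.hasBasis_nhds [CompactSpace X] (hU : IsAdaptedBasis Φ x U) :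
    (𝓝 x).HasBasis (fun _ => True) U := by
  have hclopen : ∀ ℓ, IsClopen (U ℓ) := fun ℓ => (hU.2.1 ℓ).2.1
  refine ⟨fun O => ⟨fun hO => ?_, fun ⟨ℓ, _, hℓ⟩ =>
    mem_of_superset ((hclopen ℓ).isOpen.mem_nhds (hU.2.2.1 ℓ)) hℓ⟩⟩
  obtain ⟨ℓ, hℓ⟩ := exists_subset_nhds_of_isCompact' hU.antitone.directed_ge
    (fun ℓ => (hclopen ℓ).isClosed.isCompact) (fun ℓ => (hclopen ℓ).isClosed)
    (fun y hy => by rw [hU.2.2.2.2, mem_singleton_iff] at hy; exact hy ▸ hO)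
  exact ⟨ℓ, trivial, hℓ⟩

theorem monotone_stabChain (hU : Antitone U) : Monotone (stabChain Φ U) :=
  fun _ _ hℓ _ ⟨hf, hfix⟩ => ⟨hf, fun z hz => hfix z (hU hℓ hz)⟩

theorem IsAdaptedBasis.forall_fixes_of_stabChain_eq [CompactSpace X]
    (hU : IsAdaptedBasis Φ x U) {ℓ₀ : ℕ}
    (hstab : ∀ ℓ, ℓ₀ ≤ ℓ → stabChain Φ U ℓ = stabChain Φ U ℓ₀)
    {f : C(X, X)} (hf : f ∈ actionClosure Φ) {O : Set X} (hO : O ∈ 𝓝 x)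
    (hfix : ∀ z ∈ O, f z = z) : ∀ z ∈ U ℓ₀, f z = z := by
  obtain ⟨ℓ, -, hℓ⟩ := hU.hasBasis_nhds.mem_iff.1 hO
  have hmem : f ∈ stabChain Φ U (max ℓ ℓ₀) :=
    ⟨hf, fun z hz => hfix z (hℓ (hU.antitone (le_max_left ℓ ℓ₀) hz))⟩
  rw [hstab _ (le_max_right ℓ ℓ₀)] at hmem
  exact hmem.2

end AdaptedBasis

section Equivalence

variable {X : Type*} [MetricSpace X] [CompactSpace X] {G : Type*} [Group G]
  {Φ : G → X ≃ₜ X} {x : X} {U : ℕ → Set X}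

theorem IsStableChain.exists_forall_fixes (hΦ : IsCantorAction Φ)
    (hU : IsAdaptedBasis Φ x U) (h : IsStableChain Φ U) :
    ∃ δ > 0, ∀ F ∈ actionClosure Φ, ∀ V A : Set X, IsOpen V → V.Nonempty → V ⊆ A →
      Metric.diam A < δ → (∀ z ∈ V, F z = z) → ∀ z ∈ A, F z = z := by
  obtain ⟨hA, hMin, hE⟩ := hΦ
  obtain ⟨ℓ₀, hstab⟩ := h
  obtain ⟨δ, hδ, hball⟩ :=
    hE.exists_ball_subset_image hA ((hU.2.1 ℓ₀).2.1.isOpen.mem_nhds (hU.2.2.1 ℓ₀))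
  refine ⟨δ, hδ, fun F hF V A hV hVne hVA hdiam hfix => ?_⟩
  obtain ⟨k, hk⟩ := DenseRange.exists_mem_open (hMin x) hV hVne
  let F' : C(X, X) := ((Φ k).symm : C(X, X)).comp (F.comp (Φ k))
  have hF' : F' ∈ actionClosure Φ :=
    hA.comp_mem_actionClosure (hA.map_inv k ▸ coe_mem_actionClosure k⁻¹)
      (hA.comp_mem_actionClosure hF (coe_mem_actionClosure k))
  have hF'fix : ∀ z ∈ U ℓ₀, F' z = z :=
    hU.forall_fixes_of_stabChain_eq hstab hF' ((hV.preimage (Φ k).continuous).mem_nhds hk)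
      fun z hz => by simp [F', hfix _ hz]
  intro z hz
  have hzδ : z ∈ Metric.ball (Φ k x) δ :=
    (Metric.dist_le_diam_of_mem Metric.isBounded_of_compactSpace hz (hVA hk)).trans_lt hdiam
  obtain ⟨w, hw, rfl⟩ := hball k hzδ
  apply (Φ k).symm.injective
  simpa [F'] using hF'fix w hw

theorem IsStableChain.isLCQA (hΦ : IsCantorAction Φ) (hU : IsAdaptedBasis Φ x U)
    (h : IsStableChain Φ U) : IsLCQA Φ := by
  obtain ⟨δ, hδ, hfixes⟩ := h.exists_forall_fixes hΦ hU
  refine ⟨δ, hδ, fun A _ hdiam V hV hVA f₁ hf₁ f₂ hf₂ hagree => ?_⟩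
  obtain ⟨h₂, rfl, hinv⟩ := hΦ.2.2.exists_homeomorph_of_mem_actionClosure hΦ.1 hf₂
  have hfix := hfixes _ (hΦ.1.comp_mem_actionClosure hinv hf₁) V A hV.2.1.isOpen hV.1 hVA
    hdiam fun z hz => by simp [hagree z hz]
  intro z hz
  simpa using congrArg h₂ (hfix z hz)

theorem IsLCQA.isStableChain (hΦ : IsActionHom Φ) (hU : IsAdaptedBasis Φ x U)
    (h : IsLCQA Φ) : IsStableChain Φ U := by
  obtain ⟨ε, hε, hQ⟩ := h
  obtain ⟨ℓ₀, -, hℓ₀⟩ :=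
    hU.hasBasis_nhds.mem_iff.1 (Metric.ball_mem_nhds x (by positivity : 0 < ε / 3))
  have hdiam : Metric.diam (U ℓ₀) < ε := calc
    Metric.diam (U ℓ₀) ≤ Metric.diam (Metric.ball x (ε / 3)) :=
      Metric.diam_mono hℓ₀ Metric.isBounded_ball
    _ ≤ 2 * (ε / 3) := Metric.diam_ball (by positivity)
    _ < ε := by linarith
  refine ⟨ℓ₀, fun ℓ hℓ => (monotone_stabChain hU.antitone hℓ).antisymm' ?_⟩
  rintro f ⟨hf, hfix⟩
  exact ⟨hf, hQ _ (hU.2.1 ℓ₀) hdiam _ (hU.2.1 ℓ) (hU.antitone hℓ) f hf _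
    hΦ.id_mem_actionClosure hfix⟩

end Equivalence

theorem stmt12_general {X : Type*} [MetricSpace X] [CompactSpace X]
    {G : Type*} [Group G] (Φ : G → X ≃ₜ X) (hΦ : IsCantorAction Φ)
    (x : X) (U : ℕ → Set X) (hU : IsAdaptedBasis Φ x U) :
    IsStableChain Φ U ↔ IsLCQA Φ :=
  ⟨fun h => h.isLCQA hΦ hU, fun h => h.isStableChain hΦ.1 hU⟩

/-- The stabilizer chain is eventually constant iff the action of the
Ellis group is locally completely quasi-analytic. -/
theorem stmt12 {X : Type*} [MetricSpace X] [CompactSpace X] [TotallyDisconnectedSpace X]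
    [Nonempty X] (hX : Perfect (Set.univ : Set X))
    {G : Type*} [Group G] [Countable G] (Φ : G → X ≃ₜ X) (hΦ : IsCantorAction Φ)
    (x : X) (U : ℕ → Set X) (hU : IsAdaptedBasis Φ x U) :
    IsStableChain Φ U ↔ IsLCQA Φ :=
  stmt12_general Φ hΦ x U hU
end

section
/- Let G and G' be finitely generated groups, let (X,G,Φ) and (X',G',Ψ) be Cantor actions, suppose (X',G',Ψ) is stable (there exist y' ∈ X' and an adapted neighborhood basis {V_ℓ} for Ψ at y' whose stabilizer chain {f ∈ G(Ψ) : f|_{V_ℓ} = id} is eventually constant), and suppose there is a continuous orbit equivalence h : X → X'. Then the actions are return equivalent: there exist an adapted clopen set U ⊆ X for Φ, an adapted clopen set V ⊆ X' for Ψ, a homeomorphism φ : U → V, and a group isomorphism θ : H_U → H'_V between the restricted holonomy groups H_U := {Φ(g)|_U : g ∈ G_U} ⊆ Homeo(U) and H'_V := {Ψ(k)|_V : k ∈ G'_V} ⊆ Homeo(V), such that φ(η(z)) = θ(η)(φ(z)) for all η ∈ H_U and all z ∈ U. -/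
open Set Topology Filter

/-!
Because `G` is finitely generated and `Φ` is equicontinuous, the locally constant transfer
`g ↦ k` of the orbit equivalence is uniformly locally constant: there is `δ > 0` such that on
every `δ`-ball each `Φ g` is conjugated by `h` to a single `Ψ k`. For generators this is a
Lebesgue number argument; along a word one composes, using equicontinuity to keep the images
of small balls small. The same holds for `h⁻¹`. An adapted clopen set `U` small enough that `U`
and `h U` lie in such balls then has adapted image `h U`, and conjugation by `h` identifies the
holonomy groups of `U` and `h U`.
-/

open Metric
open scoped Pointwise

theorem isClopen_iff_exists_pos_forall_dist_lt_mem_iff {X : Type*} [PseudoMetricSpace X]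
    [CompactSpace X] {W : Set X} :
    IsClopen W ↔ ∃ ε > 0, ∀ a b : X, dist a b < ε → (a ∈ W ↔ b ∈ W) := by
  constructor
  · intro hW
    obtain ⟨ε, hε, hthick⟩ :=
      hW.isClosed.isCompact.exists_thickening_subset_open hW.isOpen subset_rfl
    refine ⟨ε, hε, fun a b hab => ⟨fun ha => hthick ?_, fun hb => hthick ?_⟩⟩
    · exact mem_thickening_iff.2 ⟨a, ha, by rwa [dist_comm]⟩
    · exact mem_thickening_iff.2 ⟨b, hb, hab⟩
  · rintro ⟨ε, hε, hW⟩
    have hball : ∀ a, ∀ b ∈ ball a ε, (b ∈ W ↔ a ∈ W) := fun a b hb => hW b a hb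
    refine ⟨isOpen_compl_iff.1 ?_, ?_⟩ <;> refine isOpen_iff.2 fun a ha => ⟨ε, hε, fun b hb => ?_⟩
    · exact fun hbW => ha ((hball a b hb).1 hbW)
    · exact (hball a b hb).2 ha

section Itinerary

variable {X : Type*} [MetricSpace X] {G : Type*} {Φ : G → X ≃ₜ X}

def itineraryClass (Φ : G → X ≃ₜ X) (W : Set X) (x : X) : Set X :=
  {z | ∀ g : G, Φ g z ∈ W ↔ Φ g x ∈ W}

theorem mem_itineraryClass_self (W : Set X) (x : X) : x ∈ itineraryClass Φ W x :=
  fun _ => Iff.rfl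

theorem IsEquicontinuousAction.isClopen_itineraryClass [CompactSpace X]
    (hΦ : IsEquicontinuousAction Φ) {W : Set X} (hW : IsClopen W) (x : X) :
    IsClopen (itineraryClass Φ W x) := by
  obtain ⟨ε, hε, hWε⟩ := isClopen_iff_exists_pos_forall_dist_lt_mem_iff.1 hW
  obtain ⟨δ, hδ, hΦδ⟩ := hΦ ε hε
  refine isClopen_iff_exists_pos_forall_dist_lt_mem_iff.2 ⟨δ, hδ, fun a b hab => ?_⟩
  exact forall_congr' fun g => iff_congr (hWε _ _ (hΦδ g a b hab)) Iff.rfl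

end Itinerary

section Action

variable {X : Type*} [MetricSpace X] {G : Type*} [Group G] {Φ : G → X ≃ₜ X}

theorem IsActionHom.inv_apply_apply (hΦ : IsActionHom Φ) (g : G) (x : X) :
    Φ g⁻¹ (Φ g x) = x := by
  rw [← hΦ.2, inv_mul_cancel, hΦ.1]

theorem IsActionHom.apply_inv_apply (hΦ : IsActionHom Φ) (g : G) (x : X) :
    Φ g (Φ g⁻¹ x) = x := by
  simpa using hΦ.inv_apply_apply g⁻¹ x

theorem IsActionHom.isAdapted_of_mapsTo (hΦ : IsActionHom Φ) {U : Set X} (hne : U.Nonempty)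
    (hU : IsClopen U) (hmaps : ∀ g : G, (∃ u ∈ U, Φ g u ∈ U) → MapsTo (Φ g) U U) :
    IsAdapted Φ U := by
  refine ⟨hne, hU, fun g ⟨_, ⟨u, hu, rfl⟩, hgu⟩ => (hmaps g ⟨u, hu, hgu⟩).image_subset.antisymm ?_⟩
  have hinv : MapsTo (Φ g⁻¹) U U := hmaps g⁻¹ ⟨Φ g u, hgu, by rwa [hΦ.inv_apply_apply]⟩
  exact fun y hy => ⟨Φ g⁻¹ y, hinv hy, hΦ.apply_inv_apply g y⟩

theorem itineraryClass_subset (hΦ : IsActionHom Φ) {W : Set X} {x : X} (hx : x ∈ W) :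
    itineraryClass Φ W x ⊆ W := fun z hz => by
  simpa only [hΦ.1] using (hz 1).2 (by rwa [hΦ.1])

variable [CompactSpace X]

theorem isAdapted_itineraryClass (hΦ : IsActionHom Φ) (hΦeq : IsEquicontinuousAction Φ)
    {W : Set X} (hW : IsClopen W) (x : X) : IsAdapted Φ (itineraryClass Φ W x) := by
  refine hΦ.isAdapted_of_mapsTo ⟨x, mem_itineraryClass_self W x⟩
    (hΦeq.isClopen_itineraryClass hW x) fun g₀ ⟨u, hu, hg₀u⟩ y hy g => ?_
  rw [← hΦ.2, hy, ← hu, hΦ.2, hg₀u]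

theorem exists_isAdapted_mem_subset [TotallyDisconnectedSpace X] (hΦ : IsActionHom Φ)
    (hΦeq : IsEquicontinuousAction Φ) {O : Set X} (hO : IsOpen O) {x : X} (hx : x ∈ O) :
    ∃ U : Set X, IsAdapted Φ U ∧ x ∈ U ∧ U ⊆ O := by
  obtain ⟨W, hW, hxW, hWO⟩ := compact_exists_isClopen_in_isOpen hO hx
  exact ⟨itineraryClass Φ W x, isAdapted_itineraryClass hΦ hΦeq hW x,
    mem_itineraryClass_self W x, (itineraryClass_subset hΦ hxW).trans hWO⟩

end Action

section Transfer

variable {X : Type*} [MetricSpace X] {G : Type*} {X' : Type*} [MetricSpace X'] {G' : Type*}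
variable {Φ : G → X ≃ₜ X} {Ψ : G' → X' ≃ₜ X'}

/-- Condition (1) of a continuous orbit equivalence, for an arbitrary map `f`. -/
def LocallyTransfersOrbits (Φ : G → X ≃ₜ X) (Ψ : G' → X' ≃ₜ X') (f : X → X') : Prop :=
  ∀ (x : X) (g : G), ∃ (k : G') (O : Set X), IsOpen O ∧ x ∈ O ∧
    ∀ z ∈ O, Ψ k (f z) = f (Φ g z)

theorem LocallyTransfersOrbits.exists_uniform_ball_of_finset [CompactSpace X] {f : X → X'}
    (hf : LocallyTransfersOrbits Φ Ψ f) (T : Finset G) :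
    ∃ δ > 0, ∀ a ∈ T, ∀ x : X, ∃ k : G', EqOn (Ψ k ∘ f) (f ∘ Φ a) (ball x δ) := by
  choose k O hO hxO htr using hf
  obtain ⟨δ, hδ, hball⟩ := lebesgue_number_lemma_of_metric (c := fun x => ⋂ a ∈ T, O x a)
    isCompact_univ (fun x => isOpen_biInter_finset fun a _ => hO x a)
    fun x _ => mem_iUnion.2 ⟨x, mem_iInter₂.2 fun a _ => hxO x a⟩
  refine ⟨δ, hδ, fun a ha x => ?_⟩
  obtain ⟨i, hi⟩ := hball x (mem_univ x)
  exact ⟨k i a, fun z hz => htr i a z (mem_iInter₂.1 (hi hz) a ha)⟩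

theorem LocallyTransfersOrbits.exists_uniform_ball [CompactSpace X] [Group G] [Group.FG G]
    [Group G'] (hΦ : IsActionHom Φ) (hΦeq : IsEquicontinuousAction Φ) (hΨ : IsActionHom Ψ) {f : X → X'}
    (hf : LocallyTransfersOrbits Φ Ψ f) :
    ∃ δ > 0, ∀ (x : X) (g : G), ∃ k : G', EqOn (Ψ k ∘ f) (f ∘ Φ g) (ball x δ) := by
  classical
  obtain ⟨S, hS⟩ := Group.fg_def.1 ‹Group.FG G›
  obtain ⟨δ, hδ, hgen⟩ := hf.exists_uniform_ball_of_finset (S ∪ S⁻¹)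
  obtain ⟨δ₀, hδ₀, hΦδ⟩ := hΦeq δ hδ
  refine ⟨δ₀, hδ₀, fun x g => ?_⟩
  revert x
  have hstep : ∀ a ∈ S ∪ S⁻¹, ∀ g : G,
      (∀ x, ∃ k : G', EqOn (Ψ k ∘ f) (f ∘ Φ g) (ball x δ₀)) →
      ∀ x, ∃ k : G', EqOn (Ψ k ∘ f) (f ∘ Φ (a * g)) (ball x δ₀) := by
    intro a ha g hg x
    obtain ⟨k, hk⟩ := hg x
    -- equicontinuity puts `Φ g '' ball x δ₀` inside the `δ`-ball around `Φ g x`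
    obtain ⟨ka, hka⟩ := hgen a ha (Φ g x)
    refine ⟨ka * k, fun z hz => ?_⟩
    calc Ψ (ka * k) (f z) = Ψ ka (Ψ k (f z)) := hΨ.2 _ _ _
      _ = Ψ ka (f (Φ g z)) := congrArg _ (hk hz)
      _ = f (Φ a (Φ g z)) := hka (hΦδ g z x hz)
      _ = f (Φ (a * g) z) := by rw [hΦ.2]
  induction (hS ▸ Subgroup.mem_top g : g ∈ Subgroup.closure (S : Set G))
    using Subgroup.closure_induction_left with
  | one => exact fun x => ⟨1, fun z _ => by simp only [Function.comp_apply, hΨ.1, hΦ.1]⟩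
  | mul_left a ha g _ hg => exact hstep a (Finset.mem_union_left _ ha) g hg
  | inv_mul_cancel a ha g _ hg =>
    exact hstep a⁻¹ (Finset.mem_union_right _ (Finset.inv_mem_inv ha)) g hg

variable [CompactSpace X] [CompactSpace X'] [Group G] [Group.FG G] [Group G'] [Group.FG G']

theorem exists_isAdapted_eqOn_of_isContinuousOrbitEquivalence [TotallyDisconnectedSpace X]
    [Nonempty X] (hΦ : IsActionHom Φ) (hΦeq : IsEquicontinuousAction Φ) (hΨ : IsActionHom Ψ)
    (hΨeq : IsEquicontinuousAction Ψ) {h : X ≃ₜ X'} (hcoe : IsContinuousOrbitEquivalence Φ Ψ h) :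
    ∃ U : Set X, IsAdapted Φ U ∧ (∀ g : G, ∃ k : G', EqOn (Ψ k ∘ h) (h ∘ Φ g) U) ∧
      ∀ k : G', ∃ g : G, EqOn (Φ g ∘ h.symm) (h.symm ∘ Ψ k) (h '' U) := by
  obtain ⟨δ₁, hδ₁, hfwd⟩ := LocallyTransfersOrbits.exists_uniform_ball hΦ hΦeq hΨ hcoe.1
  obtain ⟨δ₂, hδ₂, hbwd⟩ := LocallyTransfersOrbits.exists_uniform_ball hΨ hΨeq hΦ hcoe.2
  obtain ⟨δ₃, hδ₃, hh⟩ := uniformContinuous_iff.1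
    (CompactSpace.uniformContinuous_of_continuous h.continuous) δ₂ hδ₂
  obtain ⟨x⟩ := ‹Nonempty X›
  obtain ⟨U, hU, -, hUx⟩ := exists_isAdapted_mem_subset hΦ hΦeq isOpen_ball
    (mem_ball_self (lt_min hδ₁ hδ₃))
  refine ⟨U, hU, fun g => ?_, fun k => ?_⟩
  · obtain ⟨k, hk⟩ := hfwd x g
    exact ⟨k, hk.mono (hUx.trans (ball_subset_ball (min_le_left _ _)))⟩
  · obtain ⟨g, hg⟩ := hbwd (h x) k
    refine ⟨g, hg.mono ?_⟩
    rintro _ ⟨z, hz, rfl⟩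
    exact hh (lt_of_lt_of_le (hUx hz) (min_le_right _ _))

end Transfer

section Holonomy

variable {X : Type*} [MetricSpace X] {G : Type*} {X' : Type*} [MetricSpace X'] {G' : Type*}
variable {Φ : G → X ≃ₜ X} {Ψ : G' → X' ≃ₜ X'}

theorem isAdapted_image_of_eqOn {U : Set X} (f : X ≃ₜ X') (hU : IsAdapted Φ U)
    (htr : ∀ k : G', ∃ g : G, EqOn (Φ g ∘ f.symm) (f.symm ∘ Ψ k) (f '' U)) :
    IsAdapted Ψ (f '' U) := by
  refine ⟨hU.1.image f, f.image_eq_preimage_symm U ▸ hU.2.1.preimage f.symm.continuous,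
    fun k ⟨w, hwk, hwU⟩ => ?_⟩
  obtain ⟨g, hg⟩ := htr k
  have himg : f.symm '' (Ψ k '' (f '' U)) = Φ g '' U := by
    rw [← image_comp, ← hg.image_eq, image_comp, f.image_symm, f.preimage_image]
  have hgU : Φ g '' U = U := hU.2.2 g ⟨f.symm w, himg ▸ mem_image_of_mem _ hwk,
    f.toEquiv.symm_image_image U ▸ mem_image_of_mem _ hwU⟩
  rw [← f.toEquiv.image_symm_image (Ψ k '' _)]
  exact congrArg (f '' ·) (himg.trans hgU)

variable [Group G] [Group G']

def holonomyGroup (Φ : G → X ≃ₜ X) (hΦ : IsActionHom Φ) (U : Set X) :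
    Subgroup (Equiv.Perm U) where
  carrier := {η | ∃ g : G, Φ g '' U = U ∧ ∀ z : U, (η z : X) = Φ g z}
  one_mem' := ⟨1, (setStabilizer Φ hΦ U).one_mem, fun z => (hΦ.1 z).symm⟩
  mul_mem' := by
    rintro η₁ η₂ ⟨g₁, hg₁, he₁⟩ ⟨g₂, hg₂, he₂⟩
    exact ⟨g₁ * g₂, (setStabilizer Φ hΦ U).mul_mem hg₁ hg₂, fun z => by
      rw [hΦ.2, ← he₂, ← he₁]; rfl⟩
  inv_mem' := by
    rintro η ⟨g, hg, he⟩
    refine ⟨g⁻¹, (setStabilizer Φ hΦ U).inv_mem hg, fun z => ?_⟩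
    rw [← hΦ.inv_apply_apply g (η⁻¹ z : X), ← he]
    exact congrArg (Φ g⁻¹ ∘ (↑)) (η.apply_symm_apply z)

theorem permCongr_mem_holonomyGroup (hΦ : IsActionHom Φ) (hΨ : IsActionHom Ψ) {U : Set X}
    {V : Set X'} (e : U ≃ V) {f : X → X'} (hef : ∀ z : U, (e z : X') = f z)
    (htr : ∀ g : G, ∃ k : G', EqOn (Ψ k ∘ f) (f ∘ Φ g) U) {η : Equiv.Perm U}
    (hη : η ∈ holonomyGroup Φ hΦ U) : e.permCongr η ∈ holonomyGroup Ψ hΨ V := by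
  obtain ⟨g, hgU, hηg⟩ := hη
  obtain ⟨k, hk⟩ := htr g
  have hef' : ∀ w : V, f (e.symm w) = w := fun w => by rw [← hef, e.apply_symm_apply]
  have hV : f '' U = V := by
    refine subset_antisymm ?_ fun y hy => ⟨e.symm ⟨y, hy⟩, (e.symm _).2, hef' ⟨y, hy⟩⟩
    rintro _ ⟨z, hz, rfl⟩
    exact hef ⟨z, hz⟩ ▸ (e ⟨z, hz⟩).2
  refine ⟨k, ?_, fun w => ?_⟩
  · rw [← hV, ← image_comp, hk.image_eq, image_comp, hgU]
  · calc (e.permCongr η w : X') = f (η (e.symm w)) := hef _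
      _ = f (Φ g (e.symm w)) := by rw [hηg]
      _ = Ψ k (f (e.symm w)) := (hk (e.symm w).2).symm
      _ = Ψ k w := by rw [hef']

theorem holonomyGroup_map_permCongrHom (hΦ : IsActionHom Φ) (hΨ : IsActionHom Ψ) {U : Set X}
    {V : Set X'} (e : U ≃ V) (f : X ≃ₜ X') (hef : ∀ z : U, (e z : X') = f z)
    (hfwd : ∀ g : G, ∃ k : G', EqOn (Ψ k ∘ f) (f ∘ Φ g) U)
    (hbwd : ∀ k : G', ∃ g : G, EqOn (Φ g ∘ f.symm) (f.symm ∘ Ψ k) V) :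
    (holonomyGroup Φ hΦ U).map (e.permCongrHom : Equiv.Perm U →* Equiv.Perm V) =
      holonomyGroup Ψ hΨ V := by
  refine le_antisymm (Subgroup.map_le_iff_le_comap.2 fun η hη =>
    permCongr_mem_holonomyGroup hΦ hΨ e hef hfwd hη) fun τ hτ => ?_
  have hef' : ∀ w : V, (e.symm w : X) = f.symm w := fun w => by
    rw [← f.symm_apply_apply (e.symm w), ← hef, e.apply_symm_apply]
  exact Subgroup.mem_map_equiv.2 (permCongr_mem_holonomyGroup hΨ hΦ e.symm hef' hbwd hτ)

end Holonomy

theorem stmt14_general {X : Type*} [MetricSpace X] [CompactSpace X] [TotallyDisconnectedSpace X]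
    [Nonempty X]
    {X' : Type*} [MetricSpace X'] [CompactSpace X']
    {G : Type*} [Group G] [Group.FG G]
    {G' : Type*} [Group G'] [Group.FG G']
    (Φ : G → X ≃ₜ X) (hΦ : IsCantorAction Φ)
    (Ψ : G' → X' ≃ₜ X') (hΨ : IsCantorAction Ψ)
    (h : X ≃ₜ X') (hcoe : IsContinuousOrbitEquivalence Φ Ψ h) :
    ∃ (U : Set X) (V : Set X'), IsAdapted Φ U ∧ IsAdapted Ψ V ∧
      ∃ (HU : Subgroup (Equiv.Perm U)) (HV : Subgroup (Equiv.Perm V)),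
        (HU : Set (Equiv.Perm U)) =
          {η : Equiv.Perm U | ∃ g : G, Φ g '' U = U ∧
            ∀ z : U, (↑(η z) : X) = Φ g (z : X)} ∧
        (HV : Set (Equiv.Perm V)) =
          {η : Equiv.Perm V | ∃ k : G', Ψ k '' V = V ∧
            ∀ w : V, (↑(η w) : X') = Ψ k (w : X')} ∧
        ∃ (φ : U ≃ₜ V) (θ : HU ≃* HV),
          ∀ (η : HU) (z : U), φ ((η : Equiv.Perm U) z) = (θ η : Equiv.Perm V) (φ z) := by
  obtain ⟨hΦhom, -, hΦeq⟩ := hΦ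
  obtain ⟨hΨhom, -, hΨeq⟩ := hΨ
  obtain ⟨U, hU, hfwd, hbwd⟩ :=
    exists_isAdapted_eqOn_of_isContinuousOrbitEquivalence hΦhom hΦeq hΨhom hΨeq hcoe
  let e : U ≃ (h '' U) := (h.image U).toEquiv
  have hmap := holonomyGroup_map_permCongrHom hΦhom hΨhom e h (fun _ => rfl) hfwd hbwd
  refine ⟨U, h '' U, hU, isAdapted_image_of_eqOn h hU hbwd, holonomyGroup Φ hΦhom U,
    holonomyGroup Ψ hΨhom (h '' U), rfl, rfl, h.image U,
    (e.permCongrHom.subgroupMap _).trans (MulEquiv.subgroupCongr hmap), fun η z => ?_⟩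
  show e ((η : Equiv.Perm U) z) = e ((η : Equiv.Perm U) (e.symm (e z)))
  rw [e.symm_apply_apply]

/-- Continuously orbit equivalent Cantor actions of finitely generated
groups, one of which is stable, are return equivalent. -/
theorem stmt14 {X : Type*} [MetricSpace X] [CompactSpace X] [TotallyDisconnectedSpace X]
    [Nonempty X] (hX : Perfect (Set.univ : Set X))
    {X' : Type*} [MetricSpace X'] [CompactSpace X'] [TotallyDisconnectedSpace X']
    [Nonempty X'] (hX' : Perfect (Set.univ : Set X'))
    {G : Type*} [Group G] [Countable G] [Group.FG G]
    {G' : Type*} [Group G'] [Countable G'] [Group.FG G']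
    (Φ : G → X ≃ₜ X) (hΦ : IsCantorAction Φ)
    (Ψ : G' → X' ≃ₜ X') (hΨ : IsCantorAction Ψ)
    (hstable : ∃ (y' : X') (V : ℕ → Set X'), IsAdaptedBasis Ψ y' V ∧ IsStableChain Ψ V)
    (h : X ≃ₜ X') (hcoe : IsContinuousOrbitEquivalence Φ Ψ h) :
    ∃ (U : Set X) (V : Set X'), IsAdapted Φ U ∧ IsAdapted Ψ V ∧
      ∃ (HU : Subgroup (Equiv.Perm U)) (HV : Subgroup (Equiv.Perm V)),
        (HU : Set (Equiv.Perm U)) =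
          {η : Equiv.Perm U | ∃ g : G, Φ g '' U = U ∧
            ∀ z : U, (↑(η z) : X) = Φ g (z : X)} ∧
        (HV : Set (Equiv.Perm V)) =
          {η : Equiv.Perm V | ∃ k : G', Ψ k '' V = V ∧
            ∀ w : V, (↑(η w) : X') = Ψ k (w : X')} ∧
        ∃ (φ : U ≃ₜ V) (θ : HU ≃* HV),
          ∀ (η : HU) (z : U), φ ((η : Equiv.Perm U) z) = (θ η : Equiv.Perm V) (φ z) :=
  stmt14_general Φ hΦ Ψ hΨ h hcoe
end
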